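/- arXiv:2103.10272 — 2 statements merged into one kernel-verified Lean document; each statement's English description precedes it below -/
import Mathlib

section
/- There is no bijection f from ZMod 12 to the vertex set of the icosahedron graph such that for every x in ZMod 12, the vertex f(x) is adjacent both to f(x+1) and to f(x+2). (Prohibition Lemma: no labeling of the icosahedron's vertices by the 12 tones makes every tone adjacent to the tones one and two semitones away from it.) -/
noncomputable section

/-- Points of `ℝ³` with the Euclidean metric. -/
abbrev E3 : Type := EuclideanSpace ℝ (Fin 3)

/-- Constructor for explicit points of `E3`. -/
def pt (a b c : ℝ) : E3 := (WithLp.equiv 2 (Fin 3 → ℝ)).symm ![a, b, c]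

/-- The vertex set of the regular icosahedron with edge length 2: the twelve points
`(0,±1,±φ)`, `(±1,±φ,0)`, `(±φ,0,±1)` where `φ` is the golden ratio. -/
def icoVertexSet : Set E3 :=
  {p | ∃ a b : ℝ, (a = 1 ∨ a = -1) ∧ (b = Real.goldenRatio ∨ b = -Real.goldenRatio) ∧
    (p = pt 0 a b ∨ p = pt a b 0 ∨ p = pt b 0 a)}

/-- The type of vertices of the icosahedron. -/
abbrev IcoVert : Type := {p : E3 // p ∈ icoVertexSet}

/-- The icosahedron graph: two vertices are adjacent iff their Euclidean distance
equals 2 (the edge length). -/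
def icoGraph : SimpleGraph IcoVert where
  Adj u v := dist (u : E3) (v : E3) = 2
  symm := by constructor; intro u v h; rwa [dist_comm] at h
  loopless := by constructor; intro u h; rw [dist_self] at h; norm_num at h

/-- The chromatic neighboring condition. -/
def Chromatic (f : ZMod 12 → IcoVert) : Prop :=
  ∀ x : ZMod 12, icoGraph.Adj (f x) (f (x + 1))

/-- The Pythagorean-chain neighboring condition. -/
def Pythagorean (f : ZMod 12 → IcoVert) : Prop :=
  ∀ x : ZMod 12, icoGraph.Adj (f x) (f (x + 7))

/-- The whole-tone neighboring condition for the whole tone scale containing `C`. -/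
def WholeToneEven (f : ZMod 12 → IcoVert) : Prop :=
  ∀ x : ZMod 12, Even x → icoGraph.Adj (f x) (f (x + 2))

/-- The whole-tone neighboring condition for the whole tone scale containing `C♯`. -/
def WholeToneOdd (f : ZMod 12 → IcoVert) : Prop :=
  ∀ x : ZMod 12, Odd x → icoGraph.Adj (f x) (f (x + 2))

/-- A chromatic/whole tone musical icosahedron. -/
def ChromaticWT (f : ZMod 12 → IcoVert) : Prop :=
  Chromatic f ∧ (WholeToneEven f ∨ WholeToneOdd f)

/-- A Pythagorean/whole tone musical icosahedron. -/
def PythagoreanWT (f : ZMod 12 → IcoVert) : Prop :=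
  Pythagorean f ∧ (WholeToneEven f ∨ WholeToneOdd f)

/-- Musical isomorphism: post-composition with a graph automorphism. -/
def MusIso (f g : ZMod 12 → IcoVert) : Prop :=
  ∃ σ : icoGraph ≃g icoGraph, ∀ x : ZMod 12, g x = σ (f x)

/-- Hexagon-icosahedron symmetry: raising all tones by a whole tone corresponds to a
symmetry transformation of the icosahedron. -/
def HexSym (f : ZMod 12 → IcoVert) : Prop :=
  ∃ σ : icoGraph ≃g icoGraph, ∀ x : ZMod 12, f (x + 2) = σ (f x)

/-- Three points form a golden triangle: pairwise distances `2φ, 2φ, 2`. -/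
def IsGoldenTriangle (p q r : E3) : Prop :=
  ({dist p q, dist q r, dist p r} : Multiset ℝ) =
    ({2 * Real.goldenRatio, 2 * Real.goldenRatio, 2} : Multiset ℝ)

/-- Three points form a golden gnomon: pairwise distances `2, 2, 2φ`. -/
def IsGoldenGnomon (p q r : E3) : Prop :=
  ({dist p q, dist q r, dist p r} : Multiset ℝ) =
    ({2, 2, 2 * Real.goldenRatio} : Multiset ℝ)

/-!
Whenever `f x, f (x + 1), f (x + 2)` and `f (x + 1), f (x + 2), f (x + 3)` are faces of the
icosahedron, `f (x + 3)` is the mirror image of `f x` in the plane through the centre and the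
edge `f (x + 1) f (x + 2)`, which for this realisation reads
`f (x + 3) = (φ - 1) (f (x + 1) + f (x + 2)) - f x`. The characteristic polynomial of this
recurrence divides `X ^ 5 + 1`, so `f (x + 5) = - f x` and `f` has period `10`, which is
impossible for an injective map on `ZMod 12`.
-/

open Module InnerProductSpace Real goldenRatio

theorem Function.Antiperiodic.of_golden_recurrence {G R V : Type*} [AddCommMonoidWithOne G]
    [CommRing R] [AddCommGroup V] [Module R V] {t : R} (ht : t ^ 2 + t = 1) {v : G → V}
    (hv : ∀ x, v (x + 3) = t • (v (x + 1) + v (x + 2)) - v x) :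
    Function.Antiperiodic v 5 := by
  intro x
  have h4 := hv (x + 1)
  have h5 := hv (x + 2)
  norm_num [add_assoc] at h4 h5
  linear_combination (norm := module) h5 + t • h4 + hv x + ht • (v (x + 3) + v (x + 2))

theorem eq_or_eq_neg_of_inner_eq_zero {E : Type*} [NormedAddCommGroup E] [InnerProductSpace ℝ E]
    [FiniteDimensional ℝ E] (hE : finrank ℝ E = 3) {b c u w : E}
    (hbc : LinearIndependent ℝ ![b, c]) (hub : ⟪u, b⟫_ℝ = 0) (huc : ⟪u, c⟫_ℝ = 0)
    (hwb : ⟪w, b⟫_ℝ = 0) (hwc : ⟪w, c⟫_ℝ = 0) (huw : ‖u‖ = ‖w‖) : w = u ∨ w = -u := by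
  set K := (Submodule.span ℝ (Set.range ![b, c]))ᗮ
  have hK : finrank ℝ K = 1 := by
    have := (Submodule.span ℝ (Set.range ![b, c])).finrank_add_finrank_orthogonal
    rw [finrank_span_eq_card hbc, hE, Fintype.card_fin] at this
    change 2 + finrank ℝ K = 3 at this
    omega
  have mem_K : ∀ x : E, ⟪x, b⟫_ℝ = 0 → ⟪x, c⟫_ℝ = 0 → x ∈ K := by
    intro x hb hc
    rw [← Submodule.span_singleton_le_iff_mem, ← Submodule.isOrtho_iff_le, Submodule.isOrtho_span]
    simp [hb, hc]
  rcases eq_or_ne u 0 with rfl | hu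
  · exact .inl (norm_eq_zero.mp (huw.symm.trans norm_zero))
  have hKu : ℝ ∙ u = K :=
    Submodule.eq_of_le_of_finrank_eq
      ((Submodule.span_singleton_le_iff_mem _ _).mpr (mem_K u hub huc))
      (by rw [hK, finrank_span_singleton hu])
  obtain ⟨k, rfl⟩ := Submodule.mem_span_singleton.mp (hKu ▸ mem_K w hwb hwc)
  rw [norm_smul, Real.norm_eq_abs] at huw
  have hk : |k| = 1 := (mul_eq_right₀ (norm_ne_zero_iff.mpr hu)).mp huw.symm
  rcases (abs_eq zero_le_one).mp hk with rfl | rfl <;> simp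

theorem norm_sq_pt (a b c : ℝ) : ‖pt a b c‖ ^ 2 = a ^ 2 + b ^ 2 + c ^ 2 := by
  simp [pt, EuclideanSpace.real_norm_sq_eq, Fin.sum_univ_three, add_assoc]

namespace IcoVert

theorem norm_sq (v : IcoVert) : ‖(v : E3)‖ ^ 2 = φ + 2 := by
  obtain ⟨_, a, b, ha, hb, hv | hv | hv⟩ := v <;>
  · have ha : a ^ 2 = 1 := by rcases ha with rfl | rfl <;> norm_num
    have hb : b ^ 2 = φ + 1 := by rcases hb with rfl | rfl <;> simp [goldenRatio_sq]
    simp only [hv, norm_sq_pt]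
    linarith

theorem inner_self (v : IcoVert) : ⟪(v : E3), v⟫_ℝ = φ + 2 := by
  rw [real_inner_self_eq_norm_sq, norm_sq]

theorem inner_eq_of_adj {u v : IcoVert} (h : icoGraph.Adj u v) : ⟪(u : E3), v⟫_ℝ = φ := by
  have h4 : ‖(u : E3) - v‖ ^ 2 = 4 := by
    rw [← dist_eq_norm, show dist (u : E3) v = 2 from h]
    norm_num
  rw [norm_sub_sq_real, norm_sq, norm_sq] at h4
  linarith

theorem linearIndependent_of_adj {u v : IcoVert} (h : icoGraph.Adj u v) :
    LinearIndependent ℝ ![(u : E3), v] := by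
  refine LinearIndependent.pair_iff.mpr fun s t hst => ?_
  have hu := congrArg (⟪(u : E3), ·⟫_ℝ) hst
  have hv := congrArg (⟪(v : E3), ·⟫_ℝ) hst
  simp only [inner_add_right, inner_smul_right, inner_self, inner_eq_of_adj h,
    real_inner_comm (u : E3), inner_zero_right] at hu hv
  have := goldenRatio_pos
  constructor <;> nlinarith

/-- The apexes `a`, `d` of the two faces on the edge `bc` are mirror images in the plane through
`0`, `b`, `c`; their common projection to it, and so their midpoint, is `(φ - 1) / 2 • (b + c)`. -/
theorem eq_of_adj {a b c d : IcoVert} (hab : icoGraph.Adj a b) (hac : icoGraph.Adj a c)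
    (hbc : icoGraph.Adj b c) (hbd : icoGraph.Adj b d) (hcd : icoGraph.Adj c d) (had : a ≠ d) :
    (d : E3) = (φ - 1) • ((b : E3) + c) - a := by
  have key : ∀ x : IcoVert, icoGraph.Adj x b → icoGraph.Adj x c →
      ⟪(2 : ℝ) • (x : E3) - (φ - 1) • ((b : E3) + c), b⟫_ℝ = 0 ∧
      ⟪(2 : ℝ) • (x : E3) - (φ - 1) • ((b : E3) + c), c⟫_ℝ = 0 ∧
      ‖(2 : ℝ) • (x : E3) - (φ - 1) • ((b : E3) + c)‖ ^ 2 = 4 * (φ + 1) := by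
    intro x hxb hxc
    simp only [← real_inner_self_eq_norm_sq, inner_sub_left, inner_sub_right, inner_add_left,
      inner_add_right, real_inner_smul_left, real_inner_smul_right, inner_self,
      inner_eq_of_adj hxb, inner_eq_of_adj hxc, inner_eq_of_adj hbc, inner_eq_of_adj hxb.symm,
      inner_eq_of_adj hxc.symm, inner_eq_of_adj hbc.symm]
    refine ⟨?_, ?_, ?_⟩
    · linear_combination (-2 : ℝ) * goldenRatio_sq
    · linear_combination (-2 : ℝ) * goldenRatio_sq
    · linear_combination (4 * φ - 8) * goldenRatio_sq
  obtain ⟨ha_b, ha_c, ha⟩ := key a hab hac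
  obtain ⟨hd_b, hd_c, hd⟩ := key d hbd.symm hcd.symm
  have hnorm : ‖(2 : ℝ) • (a : E3) - (φ - 1) • ((b : E3) + c)‖ =
      ‖(2 : ℝ) • (d : E3) - (φ - 1) • ((b : E3) + c)‖ := by
    rw [← sq_eq_sq₀ (norm_nonneg _) (norm_nonneg _), ha, hd]
  rcases eq_or_eq_neg_of_inner_eq_zero finrank_euclideanSpace_fin (linearIndependent_of_adj hbc)
    ha_b ha_c hd_b hd_c hnorm with h | h
  · exact absurd (Subtype.ext (by linear_combination (norm := module) (-1 / 2 : ℝ) • h)) had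
  · linear_combination (norm := module) (1 / 2 : ℝ) • h

end IcoVert

/-- **Prohibition Lemma.** There is no bijection from `ZMod 12` to the vertices of the
icosahedron graph mapping every tone adjacent to the tones one and two semitones above it. -/
theorem prohibition_lemma :
    ¬ ∃ f : ZMod 12 → IcoVert, Function.Bijective f ∧
      ∀ x : ZMod 12,
        icoGraph.Adj (f x) (f (x + 1)) ∧ icoGraph.Adj (f x) (f (x + 2)) := by
  rintro ⟨f, hf, hadj⟩
  have hrec : ∀ x, (f (x + 3) : E3) = (φ - 1) • ((f (x + 1) : E3) + f (x + 2)) - f x := by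
    intro x
    have hbc : icoGraph.Adj (f (x + 1)) (f (x + 2)) := by convert (hadj (x + 1)).1 using 2; ring
    have hbd : icoGraph.Adj (f (x + 1)) (f (x + 3)) := by convert (hadj (x + 1)).2 using 2; ring
    have hcd : icoGraph.Adj (f (x + 2)) (f (x + 3)) := by convert (hadj (x + 2)).1 using 2; ring
    exact IcoVert.eq_of_adj (hadj x).1 (hadj x).2 hbc hbd hcd
      (hf.1.ne (left_eq_add.not.mpr (by decide)))
  have hanti : Function.Antiperiodic (fun x => (f x : E3)) 5 :=
    .of_golden_recurrence (by linear_combination goldenRatio_sq) hrec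
  exact absurd (hf.1 (Subtype.ext (hanti.periodic_two_mul 0))) (by decide)
end
end

section
/- There exists a bijection f from ZMod 12 to the vertex set of the icosahedron graph such that f(x) is adjacent to f(x+1) for every x in ZMod 12, and f(x) is adjacent to f(x+2) for every even x. (A chromatic/whole tone musical icosahedron exists.) -/
noncomputable section

/-! The witness is an explicit labelling: the whole tone scale of `C` runs around a closed
6-cycle of edges, the other scale interleaves it, and tones a tritone apart sit at antipodal
vertices, `f (x + 6) = -f x`. Every required adjacency is a squared distance `4`, which reduces to
`φ² = φ + 1`. -/

open Real goldenRatio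

lemma pt_eq_pt_iff {a b c d e f : ℝ} : pt a b c = pt d e f ↔ a = d ∧ b = e ∧ c = f := by
  refine ⟨fun h => ?_, fun ⟨rfl, rfl, rfl⟩ => rfl⟩
  have hcoord := congrFun (congrArg (WithLp.equiv 2 (Fin 3 → ℝ)) h)
  exact ⟨hcoord 0, hcoord 1, hcoord 2⟩

lemma dist_pt (a b c d e f : ℝ) :
    dist (pt a b c) (pt d e f) = √((a - d) ^ 2 + (b - e) ^ 2 + (c - f) ^ 2) := by
  simp [EuclideanSpace.dist_eq, pt, Fin.sum_univ_three, Real.dist_eq, sq_abs]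

lemma dist_pt_eq_two {a b c d e f : ℝ} (h : (a - d) ^ 2 + (b - e) ^ 2 + (c - f) ^ 2 = 4) :
    dist (pt a b c) (pt d e f) = 2 := by
  rw [dist_pt, h, show (4 : ℝ) = 2 ^ 2 by norm_num, Real.sqrt_sq zero_le_two]

lemma pt_mem_icoVertexSet_of_fst_eq_zero {a b : ℝ} (ha : a = 1 ∨ a = -1) (hb : b = φ ∨ b = -φ) :
    pt 0 a b ∈ icoVertexSet :=
  ⟨a, b, ha, hb, Or.inl rfl⟩

lemma pt_mem_icoVertexSet_of_thd_eq_zero {a b : ℝ} (ha : a = 1 ∨ a = -1) (hb : b = φ ∨ b = -φ) :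
    pt a b 0 ∈ icoVertexSet :=
  ⟨a, b, ha, hb, Or.inr (Or.inl rfl)⟩

lemma pt_mem_icoVertexSet_of_snd_eq_zero {a b : ℝ} (ha : a = 1 ∨ a = -1) (hb : b = φ ∨ b = -φ) :
    pt b 0 a ∈ icoVertexSet :=
  ⟨a, b, ha, hb, Or.inr (Or.inr rfl)⟩

def chromaticWholeTonePoint : ZMod 12 → E3 :=
  ![pt 0 1 φ, pt 1 φ 0, pt φ 0 1, pt 1 (-φ) 0, pt φ 0 (-1), pt 0 1 (-φ),
    pt 0 (-1) (-φ), pt (-1) (-φ) 0, pt (-φ) 0 (-1), pt (-1) φ 0, pt (-φ) 0 1, pt 0 (-1) φ]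

lemma chromaticWholeTonePoint_mem (x : ZMod 12) : chromaticWholeTonePoint x ∈ icoVertexSet := by
  fin_cases x <;>
    first
      | exact pt_mem_icoVertexSet_of_fst_eq_zero (by norm_num) (by norm_num)
      | exact pt_mem_icoVertexSet_of_thd_eq_zero (by norm_num) (by norm_num)
      | exact pt_mem_icoVertexSet_of_snd_eq_zero (by norm_num) (by norm_num)

def chromaticWholeTone (x : ZMod 12) : IcoVert :=
  ⟨chromaticWholeTonePoint x, chromaticWholeTonePoint_mem x⟩

lemma chromaticWholeTonePoint_injective : Function.Injective chromaticWholeTonePoint := by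
  have hφ := one_lt_goldenRatio
  intro x y h
  fin_cases x <;> fin_cases y <;>
    first
      | rfl
      | (obtain ⟨h₁, h₂, h₃⟩ := pt_eq_pt_iff.mp h
         linarith)

lemma chromaticWholeTone_surjective : Function.Surjective chromaticWholeTone := by
  rintro ⟨p, a, b, rfl | rfl, rfl | rfl, rfl | rfl | rfl⟩
  exacts [⟨0, rfl⟩, ⟨1, rfl⟩, ⟨2, rfl⟩, ⟨5, rfl⟩, ⟨3, rfl⟩, ⟨10, rfl⟩,
    ⟨11, rfl⟩, ⟨9, rfl⟩, ⟨4, rfl⟩, ⟨6, rfl⟩, ⟨7, rfl⟩, ⟨8, rfl⟩]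

lemma chromatic_chromaticWholeTone : Chromatic chromaticWholeTone := by
  intro x
  fin_cases x <;> exact dist_pt_eq_two (by nlinarith [goldenRatio_sq])

lemma wholeToneEven_chromaticWholeTone : WholeToneEven chromaticWholeTone := by
  rintro x ⟨k, rfl⟩
  fin_cases k <;> exact dist_pt_eq_two (by nlinarith [goldenRatio_sq])

/-- A chromatic/whole tone musical icosahedron exists: a bijection satisfying the chromatic
neighboring condition and the whole-tone neighboring condition for the whole tone scale
containing `C`. -/
theorem chromatic_whole_tone_exists :
    ∃ f : ZMod 12 → IcoVert, Function.Bijective f ∧ Chromatic f ∧ WholeToneEven f :=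
  ⟨chromaticWholeTone,
    ⟨.of_comp (f := Subtype.val) chromaticWholeTonePoint_injective, chromaticWholeTone_surjective⟩,
    chromatic_chromaticWholeTone, wholeToneEven_chromaticWholeTone⟩

end
end
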